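/- Let A ∈ {0,1} and Y, Z, M, D, X, W be random variables, and suppose q2(Z,M,D,X) and q2'(Z,M,D,X) are bounded measurable functions both satisfying E[A·q(Z,M,D,X) − (1−A)·q1(Z,D,X) | W, M, D, X] = 0 almost surely (for the same fixed integrable q1), and suppose further that E[Y | A=1, M, D, Z, X] admits an outcome bridge representation: there exists bounded h2(W,M,D,X) with E[Y − h2(W,M,D,X) | A=1, M, D, Z, X] = 0 a.s. Then E[A·Y·q2(Z,M,D,X)] = E[A·Y·q2'(Z,M,D,X)]. -/

import Mathlib

/-!
Write `g = q2 - q2'`. Since `A ∈ {0,1}`, `A·Y·g = h2·(A·g) + A·g·(Y - h2)`. The first term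
integrates to zero because `h2` is a function of `(W,M,D,X)` and `E[A·g | W,M,D,X] = 0` is the
difference of the two treatment bridge equations. The second term is `P(A = 1)` times the
expectation of `g·(Y - h2)` under `P(· | A = 1)`, which vanishes because `g` is a function of
`(M,D,Z,X)` and `E[Y - h2 | A = 1, M,D,Z,X] = 0` is the outcome bridge equation.
-/

open MeasureTheory ProbabilityTheory

namespace MeasureTheory

variable {Ω : Type*} {m m₁ m₂ mΩ : MeasurableSpace Ω} {μ : Measure Ω}

lemma Integrable.cond {E : Type*} [NormedAddCommGroup E] {f : Ω → E} (hf : Integrable f μ)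
    (s : Set Ω) : Integrable f μ[|s] := by
  by_cases hs : μ s = 0
  · simp [cond_eq_zero_of_meas_eq_zero hs]
  · exact hf.restrict.smul_measure (ENNReal.inv_ne_top.mpr hs)

lemma setIntegral_eq_measureReal_mul_integral_cond [IsFiniteMeasure μ] (f : Ω → ℝ)
    (s : Set Ω) : ∫ ω in s, f ω ∂μ = μ.real s * ∫ ω, f ω ∂μ[|s] := by
  by_cases hs : μ s = 0
  · simp [Measure.restrict_eq_zero.mpr hs, measureReal_def, hs]
  · have hs' : μ.real s ≠ 0 := ENNReal.toReal_ne_zero.mpr ⟨hs, measure_ne_top μ s⟩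
    rw [ProbabilityTheory.cond, integral_smul_measure, ENNReal.toReal_inv, smul_eq_mul, ← mul_assoc,
      ← measureReal_def, mul_inv_cancel₀ hs', one_mul]

lemma condExp_sub_ae_eq_zero {f f' : Ω → ℝ} (hf : Integrable f μ) (hf' : Integrable f' μ)
    (hf0 : μ[f | m] =ᵐ[μ] 0) (hf'0 : μ[f' | m] =ᵐ[μ] 0) : μ[f - f' | m] =ᵐ[μ] 0 := by
  filter_upwards [condExp_sub hf hf' m, hf0, hf'0] with ω h h₀ h₀'
  simp [h, h₀, h₀']

lemma integral_mul_eq_zero_of_condExp_eq_zero (hm : m ≤ mΩ) [SigmaFinite (μ.trim hm)]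
    {f g : Ω → ℝ} (hf : StronglyMeasurable[m] f) (hfg : Integrable (f * g) μ)
    (hg : Integrable g μ) (hg0 : μ[g | m] =ᵐ[μ] 0) : ∫ ω, f ω * g ω ∂μ = 0 := by
  have hfg0 : μ[f * g | m] =ᵐ[μ] 0 := by
    filter_upwards [condExp_mul_of_stronglyMeasurable_left hf hfg hg, hg0] with ω h h0
    simp [h, h0]
  calc ∫ ω, f ω * g ω ∂μ = ∫ ω, μ[f * g | m] ω ∂μ := (integral_condExp hm).symm
    _ = 0 := by rw [integral_congr_ae hfg0, integral_zero']

lemma setIntegral_mul_eq_zero_of_bridges [IsFiniteMeasure μ]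
    (hm₁ : m₁ ≤ mΩ) (hm₂ : m₂ ≤ mΩ) {S : Set Ω} (hS : MeasurableSet S) {Y h g : Ω → ℝ}
    (hY : Integrable Y μ) (hh : StronglyMeasurable[m₁] h) {Ch : ℝ} (hhb : ∀ ω, ‖h ω‖ ≤ Ch)
    (hg : StronglyMeasurable[m₂] g) {Cg : ℝ} (hgb : ∀ ω, ‖g ω‖ ≤ Cg)
    (hSg : μ[S.indicator g | m₁] =ᵐ[μ] 0) (hbridge : μ[|S][Y - h | m₂] =ᵐ[μ[|S]] 0) :
    ∫ ω in S, Y ω * g ω ∂μ = 0 := by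
  have hhm := (hh.mono hm₁).aestronglyMeasurable (μ := μ)
  have hgm := (hg.mono hm₂).aestronglyMeasurable (μ := μ)
  have hhi : Integrable h μ := .of_bound hhm Ch (.of_forall hhb)
  have hgi : Integrable g μ := .of_bound hgm Cg (.of_forall hgb)
  have hYh : Integrable (Y - h) μ := hY.sub hhi
  have hhg : Integrable (fun ω => h ω * g ω) μ := hgi.bdd_mul hhm (.of_forall hhb)
  have hgYh : Integrable (fun ω => g ω * (Y - h) ω) μ := hYh.bdd_mul hgm (.of_forall hgb)
  have hcond : ∫ ω, g ω * (Y - h) ω ∂μ[|S] = 0 :=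
    integral_mul_eq_zero_of_condExp_eq_zero hm₂ hg
      ((hYh.cond S).bdd_mul (hgm.mono_ac cond_absolutelyContinuous) (.of_forall hgb))
      (hYh.cond S) hbridge
  have hunc : ∫ ω, h ω * S.indicator g ω ∂μ = 0 :=
    integral_mul_eq_zero_of_condExp_eq_zero hm₁ hh
      ((hgi.indicator hS).bdd_mul hhm (.of_forall hhb)) (hgi.indicator hS) hSg
  calc ∫ ω in S, Y ω * g ω ∂μ
      = ∫ ω in S, h ω * g ω ∂μ + ∫ ω in S, g ω * (Y - h) ω ∂μ := by
        rw [← integral_add hhg.restrict hgYh.restrict]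
        congr 1 with ω
        simp only [Pi.sub_apply]
        ring
    _ = ∫ ω, h ω * S.indicator g ω ∂μ + μ.real S * ∫ ω, g ω * (Y - h) ω ∂μ[|S] := by
        rw [← integral_indicator hS, setIntegral_eq_measureReal_mul_integral_cond]
        simp only [Set.indicator_mul_right]
    _ = 0 := by rw [hunc, hcond, mul_zero, add_zero]

section ZeroOne

variable {A : Ω → ℝ} (hA01 : ∀ ω, A ω = 0 ∨ A ω = 1)
include hA01

lemma indicator_eq_mul_of_eq_zero_or_one (f : Ω → ℝ) :
    {ω | A ω = 1}.indicator f = fun ω => A ω * f ω := by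
  ext ω
  rcases hA01 ω with h | h <;> simp [h]

lemma integral_mul_eq_setIntegral_of_eq_zero_or_one (hA : Measurable A) (f : Ω → ℝ) :
    ∫ ω, A ω * f ω ∂μ = ∫ ω in {ω | A ω = 1}, f ω ∂μ := by
  have hS : MeasurableSet {ω | A ω = 1} := hA (measurableSet_singleton 1)
  rw [← integral_indicator hS, indicator_eq_mul_of_eq_zero_or_one hA01]

lemma integrable_mul_sub_one_sub_mul_of_eq_zero_or_one [IsFiniteMeasure μ] (hA : Measurable A)
    {u v : Ω → ℝ} (hu : AEStronglyMeasurable u μ) {C : ℝ} (hub : ∀ ω, ‖u ω‖ ≤ C)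
    (hv : Integrable v μ) : Integrable (fun ω => A ω * u ω - (1 - A ω) * v ω) μ := by
  have hAb (ω : Ω) : ‖A ω‖ ≤ 1 ∧ ‖1 - A ω‖ ≤ 1 := by rcases hA01 ω with h | h <;> simp [h]
  exact ((Integrable.of_bound hu C (.of_forall hub)).bdd_mul hA.aestronglyMeasurable
    (.of_forall fun ω => (hAb ω).1)).sub
    (hv.bdd_mul (by fun_prop) (.of_forall fun ω => (hAb ω).2))

end ZeroOne

end MeasureTheory

theorem stmt15_general
    {Ω : Type*} [mΩ : MeasurableSpace Ω] (μ : Measure Ω) [IsProbabilityMeasure μ]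
    (A Y Z W M D X : Ω → ℝ)
    (hA : Measurable A) (hZ : Measurable Z) (hW : Measurable W)
    (hM : Measurable M) (hD : Measurable D) (hX : Measurable X)
    (hA01 : ∀ ω, A ω = 0 ∨ A ω = 1)
    (hYint : Integrable Y μ)
    (q1 : ℝ × ℝ × ℝ → ℝ)
    (hq1int : Integrable (fun ω => q1 (Z ω, D ω, X ω)) μ)
    (q2 q2' : ℝ × ℝ × ℝ × ℝ → ℝ)
    (hq2 : Measurable q2) (Cq2 : ℝ) (hq2b : ∀ p, |q2 p| ≤ Cq2)
    (hq2' : Measurable q2') (Cq2' : ℝ) (hq2'b : ∀ p, |q2' p| ≤ Cq2')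
    (mWMDX mMDZX : MeasurableSpace Ω)
    (hmWMDX : mWMDX = MeasurableSpace.comap (fun ω => (W ω, M ω, D ω, X ω)) inferInstance)
    (hmMDZX : mMDZX = MeasurableSpace.comap (fun ω => (M ω, D ω, Z ω, X ω)) inferInstance)
    (hq2eq : (μ[(fun ω => A ω * q2 (Z ω, M ω, D ω, X ω)
        - (1 - A ω) * q1 (Z ω, D ω, X ω)) | mWMDX]) =ᵐ[μ] 0)
    (hq2'eq : (μ[(fun ω => A ω * q2' (Z ω, M ω, D ω, X ω)
        - (1 - A ω) * q1 (Z ω, D ω, X ω)) | mWMDX]) =ᵐ[μ] 0)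
    (h2 : ℝ × ℝ × ℝ × ℝ → ℝ) (hh2 : Measurable h2) (Ch2 : ℝ) (hh2b : ∀ p, |h2 p| ≤ Ch2)
    (hbridge : ((μ[|{ω | A ω = 1}])[(fun ω => Y ω - h2 (W ω, M ω, D ω, X ω)) | mMDZX])
        =ᵐ[μ[|{ω | A ω = 1}]] 0) :
    ∫ ω, A ω * Y ω * q2 (Z ω, M ω, D ω, X ω) ∂μ
      = ∫ ω, A ω * Y ω * q2' (Z ω, M ω, D ω, X ω) ∂μ := by
  subst hmWMDX hmMDZX
  set S : Set Ω := {ω | A ω = 1}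
  have hS : MeasurableSet S := hA (measurableSet_singleton 1)
  set g : Ω → ℝ := fun ω => q2 (Z ω, M ω, D ω, X ω) - q2' (Z ω, M ω, D ω, X ω)
  have hZMDX : Measurable fun ω => (Z ω, M ω, D ω, X ω) := by fun_prop
  have hgm : StronglyMeasurable[.comap (fun ω => (M ω, D ω, Z ω, X ω)) inferInstance] g := by
    have hr : Measurable fun p : ℝ × ℝ × ℝ × ℝ => (p.2.2.1, p.1, p.2.1, p.2.2.2) := by fun_prop
    exact (((hq2.comp hr).sub (hq2'.comp hr)).comp (comap_measurable _)).stronglyMeasurable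
  have hqInt (q : ℝ × ℝ × ℝ × ℝ → ℝ) (hq : Measurable q) (C : ℝ) (hqb : ∀ p, |q p| ≤ C) :=
    integrable_mul_sub_one_sub_mul_of_eq_zero_or_one hA01 hA (u := fun ω => q (Z ω, M ω, D ω, X ω))
      (hq.comp hZMDX).aestronglyMeasurable (fun ω => hqb _) hq1int
  have hAg : μ[S.indicator g | .comap (fun ω => (W ω, M ω, D ω, X ω)) inferInstance] =ᵐ[μ] 0 := by
    convert condExp_sub_ae_eq_zero (hqInt q2 hq2 Cq2 hq2b) (hqInt q2' hq2' Cq2' hq2'b) hq2eq hq2'eq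
      using 2
    rw [indicator_eq_mul_of_eq_zero_or_one hA01]
    ext ω
    simp only [Pi.sub_apply, g]
    ring
  have hYg := setIntegral_mul_eq_zero_of_bridges (by fun_prop : Measurable _).comap_le
    (by fun_prop : Measurable _).comap_le hS hYint
    (hh2.comp (comap_measurable _)).stronglyMeasurable (fun ω => hh2b _) hgm
    (fun ω => (abs_sub _ _).trans (add_le_add (hq2b _) (hq2'b _))) hAg hbridge
  have hYq (q : ℝ × ℝ × ℝ × ℝ → ℝ) (hq : Measurable q) (C : ℝ) (hqb : ∀ p, |q p| ≤ C) :
      Integrable (fun ω => Y ω * q (Z ω, M ω, D ω, X ω)) (μ.restrict S) :=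
    hYint.restrict.mul_bdd (hq.comp hZMDX).aestronglyMeasurable (.of_forall fun ω => hqb _)
  simp_rw [mul_assoc, integral_mul_eq_setIntegral_of_eq_zero_or_one hA01 hA]
  rw [← sub_eq_zero, ← integral_sub (hYq q2 hq2 Cq2 hq2b) (hYq q2' hq2' Cq2' hq2'b), ← hYg]
  simp only [g, mul_sub]

/-- non-uniqueness of the treatment bridge function `q2` does not
affect identification. If bounded measurable `q2` and `q2'` both solve
`E[A·q(Z,M,D,X) − (1−A)·q1(Z,D,X) | W, M, D, X] = 0` a.s. (same integrable `q1`),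
and a bounded outcome bridge `h2` exists with `E[Y − h2 | A=1, M, D, Z, X] = 0`
a.s., then `E[A·Y·q2] = E[A·Y·q2']`. -/
theorem stmt15
    {Ω : Type*} [mΩ : MeasurableSpace Ω] (μ : Measure Ω) [IsProbabilityMeasure μ]
    (A Y Z W M D X : Ω → ℝ)
    (hA : Measurable A) (hY : Measurable Y) (hZ : Measurable Z) (hW : Measurable W)
    (hM : Measurable M) (hD : Measurable D) (hX : Measurable X)
    (hA01 : ∀ ω, A ω = 0 ∨ A ω = 1)
    (hYint : Integrable Y μ)
    (q1 : ℝ × ℝ × ℝ → ℝ) (hq1 : Measurable q1)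
    (hq1int : Integrable (fun ω => q1 (Z ω, D ω, X ω)) μ)
    (q2 q2' : ℝ × ℝ × ℝ × ℝ → ℝ)
    (hq2 : Measurable q2) (Cq2 : ℝ) (hq2b : ∀ p, |q2 p| ≤ Cq2)
    (hq2' : Measurable q2') (Cq2' : ℝ) (hq2'b : ∀ p, |q2' p| ≤ Cq2')
    (mWMDX mMDZX : MeasurableSpace Ω)
    (hmWMDX : mWMDX = MeasurableSpace.comap (fun ω => (W ω, M ω, D ω, X ω)) inferInstance)
    (hmMDZX : mMDZX = MeasurableSpace.comap (fun ω => (M ω, D ω, Z ω, X ω)) inferInstance)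
    (hq2eq : (μ[(fun ω => A ω * q2 (Z ω, M ω, D ω, X ω)
        - (1 - A ω) * q1 (Z ω, D ω, X ω)) | mWMDX]) =ᵐ[μ] 0)
    (hq2'eq : (μ[(fun ω => A ω * q2' (Z ω, M ω, D ω, X ω)
        - (1 - A ω) * q1 (Z ω, D ω, X ω)) | mWMDX]) =ᵐ[μ] 0)
    (h2 : ℝ × ℝ × ℝ × ℝ → ℝ) (hh2 : Measurable h2) (Ch2 : ℝ) (hh2b : ∀ p, |h2 p| ≤ Ch2)
    (hbridge : ((μ[|{ω | A ω = 1}])[(fun ω => Y ω - h2 (W ω, M ω, D ω, X ω)) | mMDZX])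
        =ᵐ[μ[|{ω | A ω = 1}]] 0)
    (hi : Integrable (fun ω => A ω * Y ω * q2 (Z ω, M ω, D ω, X ω)) μ)
    (hi' : Integrable (fun ω => A ω * Y ω * q2' (Z ω, M ω, D ω, X ω)) μ) :
    ∫ ω, A ω * Y ω * q2 (Z ω, M ω, D ω, X ω) ∂μ
      = ∫ ω, A ω * Y ω * q2' (Z ω, M ω, D ω, X ω) ∂μ :=
  stmt15_general (mΩ := mΩ) μ A Y Z W M D X hA hZ hW hM hD hX hA01 hYint q1 hq1int q2 q2' hq2 Cq2
    hq2b hq2' Cq2' hq2'b mWMDX mMDZX hmWMDX hmMDZX hq2eq hq2'eq h2 hh2 Ch2 hh2b hbridge
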